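/- Let ρ_{AB} = (1/2)(|0⟩⟨0|_A ⊗ ρ'_B + |1⟩⟨1|_A ⊗ ρ''_B) be a classical-quantum state with A a qubit, and let {P_B, 1−P_B} be any two-outcome POVM on B with Tr(ρ_B P_B) = 1/2 where ρ_B = (ρ'_B + ρ''_B)/2. Then the two post-measurement states on A satisfy ‖ρ_{A,1} − ρ_{A,2}‖_1 = 2|Tr((ρ'_B − ρ''_B)P_B)| ≤ ‖ρ'_B − ρ''_B‖_1; consequently C_B^{(2)}(ρ_{AB}) ≤ C_A^{(2)}(ρ_{AB}) = ‖ρ'_B − ρ''_B‖_1/4. -/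

import Mathlib

open Matrix BigOperators ComplexOrder Kronecker

def IsDensity {n : Type*} [Fintype n] [DecidableEq n] (ρ : Matrix n n ℂ) : Prop :=
  ρ.PosSemidef ∧ ρ.trace = 1

noncomputable def traceNorm {d : ℕ} (A : Matrix (Fin d) (Fin d) ℂ) : ℝ :=
  if h : A.IsHermitian then ∑ i, |h.eigenvalues i| else 0

noncomputable def ptraceA {dA dB : ℕ}
    (M : Matrix (Fin dA × Fin dB) (Fin dA × Fin dB) ℂ) : Matrix (Fin dB) (Fin dB) ℂ :=
  Matrix.of fun i j => ∑ a, M (a, i) (a, j)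

/-- The correlation measure `C_A^{(2)}`: the supremum, over two-outcome POVMs on `A`
that are maximally entropic for `ρ` (both outcome probabilities equal `1/2`), of a
quarter of the trace distance of the two post-measurement states on `B`. -/
noncomputable def CA2 {dA dB : ℕ}
    (ρ : Matrix (Fin dA × Fin dB) (Fin dA × Fin dB) ℂ) : ℝ :=
  sSup { x : ℝ | ∃ P₁ P₂ : Matrix (Fin dA) (Fin dA) ℂ,
    P₁.PosSemidef ∧ P₂.PosSemidef ∧ P₁ + P₂ = 1 ∧
    (ρ * (P₁ ⊗ₖ (1 : Matrix (Fin dB) (Fin dB) ℂ))).trace = 1/2 ∧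
    (ρ * (P₂ ⊗ₖ (1 : Matrix (Fin dB) (Fin dB) ℂ))).trace = 1/2 ∧
    x = traceNorm ((2 : ℂ) • ptraceA (ρ * (P₁ ⊗ₖ (1 : Matrix (Fin dB) (Fin dB) ℂ)))
          - (2 : ℂ) • ptraceA (ρ * (P₂ ⊗ₖ (1 : Matrix (Fin dB) (Fin dB) ℂ)))) / 4 }


/-- Partial trace over the second (B) factor of a bipartite matrix. -/
noncomputable def ptraceB {dA dB : ℕ}
    (M : Matrix (Fin dA × Fin dB) (Fin dA × Fin dB) ℂ) : Matrix (Fin dA) (Fin dA) ℂ :=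
  Matrix.of fun i j => ∑ b, M (i, b) (j, b)

/-- The correlation measure `C_B^{(2)}`, defined with measurements on `B`. -/
noncomputable def CB2 {dA dB : ℕ}
    (ρ : Matrix (Fin dA × Fin dB) (Fin dA × Fin dB) ℂ) : ℝ :=
  sSup { x : ℝ | ∃ Q₁ Q₂ : Matrix (Fin dB) (Fin dB) ℂ,
    Q₁.PosSemidef ∧ Q₂.PosSemidef ∧ Q₁ + Q₂ = 1 ∧
    (ρ * ((1 : Matrix (Fin dA) (Fin dA) ℂ) ⊗ₖ Q₁)).trace = 1/2 ∧
    (ρ * ((1 : Matrix (Fin dA) (Fin dA) ℂ) ⊗ₖ Q₂)).trace = 1/2 ∧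
    x = traceNorm ((2 : ℂ) • ptraceB (ρ * ((1 : Matrix (Fin dA) (Fin dA) ℂ) ⊗ₖ Q₁))
          - (2 : ℂ) • ptraceB (ρ * ((1 : Matrix (Fin dA) (Fin dA) ℂ) ⊗ₖ Q₂))) / 4 }

open scoped MatrixOrder

/-!
Every measurement `{P, 1 - P}` on `B` leaves `A` in the diagonal states
`diag(Tr ρ'P, Tr ρ''P)` and `diag(Tr ρ'(1 - P), Tr ρ''(1 - P))`; when the outcomes are
equiprobable their difference is `Tr((ρ' - ρ'')P) • diag(1, -1)`. Since `ρ' - ρ''` is traceless,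
`2 Tr((ρ' - ρ'')P) = Tr((ρ' - ρ'')(2P - 1))`, and `-1 ≤ 2P - 1 ≤ 1` bounds this by
`‖ρ' - ρ''‖₁`. A measurement `{P₁, P₂}` on the qubit `A` leaves `B` in states whose difference is
`(P₁₀₀ - P₂₀₀) • (ρ' - ρ'')` with `|P₁₀₀ - P₂₀₀| ≤ 1`, and the measurement in the computational
basis attains `ρ' - ρ''`.
-/

section TraceNorm
variable {n : ℕ}

lemma traceNorm_nonneg (A : Matrix (Fin n) (Fin n) ℂ) : 0 ≤ traceNorm A := by
  unfold traceNorm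
  split_ifs
  exacts [Finset.sum_nonneg fun i _ => abs_nonneg _, le_rfl]

lemma traceNorm_eq_sum_roots_charpoly {A : Matrix (Fin n) (Fin n) ℂ} (hA : A.IsHermitian) :
    traceNorm A = (A.charpoly.roots.map fun z => |z.re|).sum := by
  simp [traceNorm, dif_pos hA, hA.roots_charpoly_eq_eigenvalues, Finset.sum_eq_multiset_sum,
    Function.comp_def]

lemma traceNorm_mul_diagonal_mul_star_of_mem_unitary {U : Matrix (Fin n) (Fin n) ℂ}
    (hU : U ∈ unitary _) (d : Fin n → ℝ) :
    traceNorm (U * diagonal (fun i => (d i : ℂ)) * star U) = ∑ i, |d i| := by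
  have hD : (diagonal fun i => (d i : ℂ)).IsHermitian :=
    isHermitian_diagonal_of_self_adjoint _ (by ext; simp)
  have hA : (U * diagonal (fun i => (d i : ℂ)) * star U).IsHermitian :=
    isHermitian_mul_mul_conjTranspose U hD
  rw [traceNorm_eq_sum_roots_charpoly hA, mul_assoc,
    charpoly_mul_comm, mul_assoc, Unitary.star_mul_self_of_mem hU, mul_one, charpoly_diagonal,
    Polynomial.roots_prod _ _ (by simp [Finset.prod_ne_zero_iff, Polynomial.X_sub_C_ne_zero])]
  simp [Finset.sum_eq_multiset_sum, Function.comp_def]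

lemma traceNorm_diagonal (d : Fin n → ℝ) :
    traceNorm (diagonal fun i => (d i : ℂ)) = ∑ i, |d i| := by
  simpa using traceNorm_mul_diagonal_mul_star_of_mem_unitary (one_mem _) d

lemma traceNorm_real_smul {A : Matrix (Fin n) (Fin n) ℂ} (hA : A.IsHermitian) (c : ℝ) :
    traceNorm ((c : ℂ) • A) = |c| * traceNorm A := by
  set U := (hA.eigenvectorUnitary : Matrix (Fin n) (Fin n) ℂ)
  have hcA : (c : ℂ) • A = U * diagonal (fun i => ((c * hA.eigenvalues i : ℝ) : ℂ)) * star U := by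
    conv_lhs => rw [hA.spectral_theorem, Unitary.conjStarAlgAut_apply]
    rw [← smul_mul, ← Matrix.mul_smul, ← diagonal_smul]
    congr 3
    ext i
    simp
  rw [hcA, traceNorm_mul_diagonal_mul_star_of_mem_unitary hA.eigenvectorUnitary.2, traceNorm,
    dif_pos hA, Finset.mul_sum]
  simp [abs_mul]

lemma abs_re_diag_le_one {ι : Type*} [Fintype ι] [DecidableEq ι]
    {S : Matrix ι ι ℂ} (h₁ : -1 ≤ S) (h₂ : S ≤ 1) (i : ι) : |(S i i).re| ≤ 1 := by
  have hlo := (Complex.nonneg_iff.mp ((le_iff.mp h₁).diag_nonneg (i := i))).1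
  have hhi := (Complex.nonneg_iff.mp ((le_iff.mp h₂).diag_nonneg (i := i))).1
  simp only [Matrix.sub_apply, Matrix.neg_apply, one_apply_eq, sub_neg_eq_add, Complex.add_re,
    Complex.one_re, Complex.sub_re] at hlo hhi
  rw [abs_le]; constructor <;> linarith

lemma abs_re_trace_mul_le_traceNorm {A S : Matrix (Fin n) (Fin n) ℂ} (hA : A.IsHermitian)
    (h₁ : -1 ≤ S) (h₂ : S ≤ 1) : |(A * S).trace.re| ≤ traceNorm A := by
  set U := (hA.eigenvectorUnitary : Matrix (Fin n) (Fin n) ℂ)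
  have hU : star U * U = 1 := Unitary.star_mul_self_of_mem hA.eigenvectorUnitary.2
  set Q := star U * S * U
  have hQ₁ : -1 ≤ Q := by simpa [hU] using star_left_conjugate_le_conjugate h₁ U
  have hQ₂ : Q ≤ 1 := by simpa [hU] using star_left_conjugate_le_conjugate h₂ U
  have htrace : (A * S).trace.re = ∑ i, hA.eigenvalues i * (Q i i).re := by
    have hcycle : (A * S).trace = (diagonal (RCLike.ofReal ∘ hA.eigenvalues) * Q).trace := by
      conv_lhs => rw [hA.spectral_theorem, Unitary.conjStarAlgAut_apply]
      simp only [Q, ← mul_assoc]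
      rw [trace_mul_comm _ U]
      simp only [U, mul_assoc]
    rw [hcycle]
    simp [trace, diagonal_mul, Complex.re_sum]
  rw [htrace, traceNorm, dif_pos hA]
  refine (Finset.abs_sum_le_sum_abs _ _).trans (Finset.sum_le_sum fun i _ => ?_)
  rw [abs_mul]
  exact mul_le_of_le_one_right (abs_nonneg _) (abs_re_diag_le_one hQ₁ hQ₂ i)

lemma two_mul_abs_re_trace_mul_le_traceNorm {Δ P : Matrix (Fin n) (Fin n) ℂ} (hΔ : Δ.IsHermitian)
    (hΔ₀ : Δ.trace = 0) (hP₀ : 0 ≤ P) (hP₁ : P ≤ 1) : 2 * |(Δ * P).trace.re| ≤ traceNorm Δ := by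
  have h₁ : -1 ≤ P + P - 1 := by simpa using add_le_add hP₀ hP₀
  have h₂ : P + P - 1 ≤ 1 := by simpa [sub_le_iff_le_add] using add_le_add hP₁ hP₁
  have htrace : (Δ * (P + P - 1)).trace = 2 * (Δ * P).trace := by
    simp [mul_sub, mul_add, hΔ₀, two_mul]
  simpa [htrace, abs_mul] using abs_re_trace_mul_le_traceNorm hΔ h₁ h₂

lemma traceNorm_single_sub_single :
    traceNorm (single (0 : Fin 2) 0 (1 : ℂ) - single 1 1 1) = 2 := by
  have h : single (0 : Fin 2) 0 (1 : ℂ) - single 1 1 1 =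
      diagonal fun i => ((![1, -1] i : ℝ) : ℂ) := by
    ext i j; fin_cases i <;> fin_cases j <;> simp
  rw [h, traceNorm_diagonal]
  norm_num

end TraceNorm

lemma Matrix.IsHermitian.ofReal_re_trace_mul {ι : Type*} [Fintype ι] {A B : Matrix ι ι ℂ}
    (hA : A.IsHermitian) (hB : B.IsHermitian) : (((A * B).trace.re : ℝ) : ℂ) = (A * B).trace := by
  refine Complex.conj_eq_iff_re.mp ?_
  have h := trace_conjTranspose (A * B)
  rw [conjTranspose_mul, hA.eq, hB.eq, trace_mul_comm] at h
  exact h.symm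

section PartialTrace
variable {dA dB : ℕ}

@[simp] lemma ptraceA_add (M N : Matrix (Fin dA × Fin dB) (Fin dA × Fin dB) ℂ) :
    ptraceA (M + N) = ptraceA M + ptraceA N := by
  ext; simp [ptraceA, Finset.sum_add_distrib]

@[simp] lemma ptraceA_smul (c : ℂ) (M : Matrix (Fin dA × Fin dB) (Fin dA × Fin dB) ℂ) :
    ptraceA (c • M) = c • ptraceA M := by
  ext; simp [ptraceA, Finset.mul_sum]

@[simp] lemma ptraceA_kronecker (E : Matrix (Fin dA) (Fin dA) ℂ) (M : Matrix (Fin dB) (Fin dB) ℂ) :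
    ptraceA (E ⊗ₖ M) = E.trace • M := by
  ext; simp [ptraceA, trace, Finset.sum_mul]

@[simp] lemma ptraceB_add (M N : Matrix (Fin dA × Fin dB) (Fin dA × Fin dB) ℂ) :
    ptraceB (M + N) = ptraceB M + ptraceB N := by
  ext; simp [ptraceB, Finset.sum_add_distrib]

@[simp] lemma ptraceB_smul (c : ℂ) (M : Matrix (Fin dA × Fin dB) (Fin dA × Fin dB) ℂ) :
    ptraceB (c • M) = c • ptraceB M := by
  ext; simp [ptraceB, Finset.mul_sum]

@[simp] lemma ptraceB_kronecker (E : Matrix (Fin dA) (Fin dA) ℂ) (M : Matrix (Fin dB) (Fin dB) ℂ) :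
    ptraceB (E ⊗ₖ M) = M.trace • E := by
  ext; simp [ptraceB, trace, Finset.mul_sum, mul_comm]

end PartialTrace

noncomputable def cqState {dB : ℕ} (ρ' ρ'' : Matrix (Fin dB) (Fin dB) ℂ) :
    Matrix (Fin 2 × Fin dB) (Fin 2 × Fin dB) ℂ :=
  (1/2 : ℂ) • (Matrix.single (0 : Fin 2) 0 (1 : ℂ) ⊗ₖ ρ'
    + Matrix.single (1 : Fin 2) 1 (1 : ℂ) ⊗ₖ ρ'')

section ClassicalQuantum
variable {dB : ℕ} {ρ' ρ'' : Matrix (Fin dB) (Fin dB) ℂ}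

lemma cqState_mul_one_kronecker (Q : Matrix (Fin dB) (Fin dB) ℂ) :
    cqState ρ' ρ'' * (1 ⊗ₖ Q) = (1/2 : ℂ) •
      (single (0 : Fin 2) 0 (1 : ℂ) ⊗ₖ (ρ' * Q) + single (1 : Fin 2) 1 (1 : ℂ) ⊗ₖ (ρ'' * Q)) := by
  simp only [cqState, smul_mul, add_mul, ← mul_kronecker_mul, mul_one]

lemma cqState_mul_kronecker_one (P : Matrix (Fin 2) (Fin 2) ℂ) :
    cqState ρ' ρ'' * (P ⊗ₖ 1) = (1/2 : ℂ) •
      ((single (0 : Fin 2) 0 (1 : ℂ) * P) ⊗ₖ ρ' + (single (1 : Fin 2) 1 (1 : ℂ) * P) ⊗ₖ ρ'') := by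
  simp only [cqState, smul_mul, add_mul, ← mul_kronecker_mul, mul_one]

lemma trace_cqState_mul_one_kronecker (Q : Matrix (Fin dB) (Fin dB) ℂ) :
    (cqState ρ' ρ'' * (1 ⊗ₖ Q)).trace = (((1/2 : ℂ) • (ρ' + ρ'')) * Q).trace := by
  simp [cqState_mul_one_kronecker, trace_kronecker, add_mul, trace_add]

lemma trace_cqState_mul_kronecker_one (hρ' : ρ'.trace = 1) (hρ'' : ρ''.trace = 1)
    (P : Matrix (Fin 2) (Fin 2) ℂ) :
    (cqState ρ' ρ'' * (P ⊗ₖ 1)).trace = (P 0 0 + P 1 1) / 2 := by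
  simp only [cqState_mul_kronecker_one, trace_smul, trace_add, trace_kronecker, hρ', hρ'',
    trace_single_mul]
  simp only [one_div, smul_eq_mul, one_mul, mul_one]
  ring

lemma two_smul_ptraceB_cqState_mul (Q : Matrix (Fin dB) (Fin dB) ℂ) :
    (2 : ℂ) • ptraceB (cqState ρ' ρ'' * (1 ⊗ₖ Q)) =
      (ρ' * Q).trace • single (0 : Fin 2) 0 (1 : ℂ)
        + (ρ'' * Q).trace • single (1 : Fin 2) 1 (1 : ℂ) := by
  simp [cqState_mul_one_kronecker]

lemma two_smul_ptraceA_cqState_mul (P : Matrix (Fin 2) (Fin 2) ℂ) :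
    (2 : ℂ) • ptraceA (cqState ρ' ρ'' * (P ⊗ₖ 1)) = P 0 0 • ρ' + P 1 1 • ρ'' := by
  simp [cqState_mul_kronecker_one, smul_smul, trace_single_mul]

lemma two_smul_ptraceB_cqState_sub (hρ' : ρ'.trace = 1) (hρ'' : ρ''.trace = 1)
    {P : Matrix (Fin dB) (Fin dB) ℂ} (hP : (((1/2 : ℂ) • (ρ' + ρ'')) * P).trace = 1/2) :
    (2 : ℂ) • ptraceB (cqState ρ' ρ'' * (1 ⊗ₖ P))
        - (2 : ℂ) • ptraceB (cqState ρ' ρ'' * (1 ⊗ₖ (1 - P)))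
      = ((ρ' - ρ'') * P).trace • (single (0 : Fin 2) 0 (1 : ℂ) - single 1 1 1) := by
  have hsum : (ρ' * P).trace + (ρ'' * P).trace = 1 := by
    simp only [smul_mul, add_mul, trace_smul, trace_add, smul_eq_mul] at hP
    linear_combination 2 * hP
  simp only [two_smul_ptraceB_cqState_mul, mul_sub, sub_mul, trace_sub, mul_one, hρ', hρ'']
  linear_combination (norm := module) hsum • (single (0 : Fin 2) 0 (1 : ℂ) + single 1 1 1)

lemma traceNorm_two_smul_ptraceB_cqState_sub (hΔ : (ρ' - ρ'').IsHermitian)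
    (hρ' : ρ'.trace = 1) (hρ'' : ρ''.trace = 1) {P : Matrix (Fin dB) (Fin dB) ℂ}
    (hP : P.IsHermitian) (htr : (((1/2 : ℂ) • (ρ' + ρ'')) * P).trace = 1/2) :
    traceNorm ((2 : ℂ) • ptraceB (cqState ρ' ρ'' * (1 ⊗ₖ P))
        - (2 : ℂ) • ptraceB (cqState ρ' ρ'' * (1 ⊗ₖ (1 - P))))
      = 2 * |((ρ' - ρ'') * P).trace.re| := by
  have hσ : (single (0 : Fin 2) (0 : Fin 2) (1 : ℂ) - single 1 1 1).IsHermitian := by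
    simp [IsHermitian, conjTranspose_sub]
  rw [two_smul_ptraceB_cqState_sub hρ' hρ'' htr, ← hΔ.ofReal_re_trace_mul hP,
    traceNorm_real_smul hσ, traceNorm_single_sub_single, Complex.ofReal_re, mul_comm]

lemma traceNorm_two_smul_ptraceB_cqState_sub_le (hΔ : (ρ' - ρ'').IsHermitian)
    (hρ' : ρ'.trace = 1) (hρ'' : ρ''.trace = 1) {P : Matrix (Fin dB) (Fin dB) ℂ}
    (hP₀ : 0 ≤ P) (hP₁ : P ≤ 1) (htr : (((1/2 : ℂ) • (ρ' + ρ'')) * P).trace = 1/2) :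
    traceNorm ((2 : ℂ) • ptraceB (cqState ρ' ρ'' * (1 ⊗ₖ P))
        - (2 : ℂ) • ptraceB (cqState ρ' ρ'' * (1 ⊗ₖ (1 - P)))) ≤ traceNorm (ρ' - ρ'') := by
  have hΔtr : (ρ' - ρ'').trace = 0 := by rw [trace_sub, hρ', hρ'', sub_self]
  rw [traceNorm_two_smul_ptraceB_cqState_sub hΔ hρ' hρ'' hP₀.posSemidef.isHermitian htr]
  exact two_mul_abs_re_trace_mul_le_traceNorm hΔ hΔtr hP₀ hP₁

lemma traceNorm_two_smul_ptraceA_cqState_sub_le (hΔ : (ρ' - ρ'').IsHermitian)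
    (hρ' : ρ'.trace = 1) (hρ'' : ρ''.trace = 1) {P₁ P₂ : Matrix (Fin 2) (Fin 2) ℂ}
    (hP₁ : P₁.PosSemidef) (hP₂ : P₂.PosSemidef) (hsum : P₁ + P₂ = 1)
    (htr : (cqState ρ' ρ'' * (P₁ ⊗ₖ 1)).trace = 1/2) :
    traceNorm ((2 : ℂ) • ptraceA (cqState ρ' ρ'' * (P₁ ⊗ₖ 1))
        - (2 : ℂ) • ptraceA (cqState ρ' ρ'' * (P₂ ⊗ₖ 1))) ≤ traceNorm (ρ' - ρ'') := by
  rw [trace_cqState_mul_kronecker_one hρ' hρ''] at htr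
  have h₀ : P₁ 0 0 + P₂ 0 0 = 1 := by simpa using congrFun (congrFun hsum 0) 0
  have h₁ : P₁ 1 1 + P₂ 1 1 = 1 := by simpa using congrFun (congrFun hsum 1) 1
  obtain ⟨hp₁, hp₁'⟩ := Complex.nonneg_iff.mp (hP₁.diag_nonneg (i := 0))
  obtain ⟨hp₂, hp₂'⟩ := Complex.nonneg_iff.mp (hP₂.diag_nonneg (i := 0))
  set s : ℝ := (P₁ 0 0 - P₂ 0 0).re
  have hs : |s| ≤ 1 := by
    have := congrArg Complex.re h₀
    simp only [Complex.add_re, Complex.one_re] at this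
    rw [abs_le]; constructor <;> simp only [s, Complex.sub_re] <;> linarith
  have hdiff : (2 : ℂ) • ptraceA (cqState ρ' ρ'' * (P₁ ⊗ₖ 1))
      - (2 : ℂ) • ptraceA (cqState ρ' ρ'' * (P₂ ⊗ₖ 1)) = (s : ℂ) • (ρ' - ρ'') := by
    have hs' : (s : ℂ) = P₁ 0 0 - P₂ 0 0 := Complex.ext (by simp [s]) (by simp [← hp₁', ← hp₂'])
    rw [two_smul_ptraceA_cqState_mul, two_smul_ptraceA_cqState_mul, hs']
    linear_combination (norm := module) (4 * htr - h₀ - h₁) • ρ''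
  rw [hdiff, traceNorm_real_smul hΔ]
  exact mul_le_of_le_one_left (traceNorm_nonneg _) hs

lemma CA2_cqState (hΔ : (ρ' - ρ'').IsHermitian) (hρ' : ρ'.trace = 1) (hρ'' : ρ''.trace = 1) :
    CA2 (cqState ρ' ρ'') = traceNorm (ρ' - ρ'') / 4 := by
  refine IsGreatest.csSup_eq ⟨?_, ?_⟩
  · have hE : ∀ i : Fin 2, (single i i (1 : ℂ)).PosSemidef := fun i =>
      diagonal_single i (1 : ℂ) ▸ PosSemidef.diagonal (Pi.single_nonneg.mpr zero_le_one)
    refine ⟨_, _, hE 0, hE 1, ?_, ?_, ?_, ?_⟩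
    · ext i j; fin_cases i <;> fin_cases j <;> simp
    · simp [trace_cqState_mul_kronecker_one hρ' hρ'']
    · simp [trace_cqState_mul_kronecker_one hρ' hρ'']
    · simp [two_smul_ptraceA_cqState_mul]
  · rintro x ⟨P₁, P₂, hP₁, hP₂, hsum, htr, -, rfl⟩
    gcongr
    exact traceNorm_two_smul_ptraceA_cqState_sub_le hΔ hρ' hρ'' hP₁ hP₂ hsum htr

lemma CB2_cqState_le (hΔ : (ρ' - ρ'').IsHermitian) (hρ' : ρ'.trace = 1) (hρ'' : ρ''.trace = 1) :
    CB2 (cqState ρ' ρ'') ≤ traceNorm (ρ' - ρ'') / 4 := by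
  refine Real.sSup_le ?_ (by have := traceNorm_nonneg (ρ' - ρ''); positivity)
  rintro x ⟨Q₁, Q₂, hQ₁, hQ₂, hsum, htr, -, rfl⟩
  obtain rfl : Q₂ = 1 - Q₁ := eq_sub_of_add_eq' hsum
  rw [trace_cqState_mul_one_kronecker] at htr
  gcongr
  exact traceNorm_two_smul_ptraceB_cqState_sub_le hΔ hρ' hρ'' hQ₁.nonneg (le_iff.mpr hQ₂) htr

end ClassicalQuantum

/-- For the classical-quantum state
`ρ_{AB} = (1/2)(|0⟩⟨0|_A ⊗ ρ'_B + |1⟩⟨1|_A ⊗ ρ''_B)` and any maximally entropic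
two-outcome POVM `{P_B, 1 - P_B}` on `B`, the post-measurement states on `A` satisfy
`‖ρ_{A,1} - ρ_{A,2}‖₁ = 2|Tr((ρ'_B - ρ''_B)P_B)| ≤ ‖ρ'_B - ρ''_B‖₁`; consequently
`C_B^{(2)}(ρ_{AB}) ≤ C_A^{(2)}(ρ_{AB}) = ‖ρ'_B - ρ''_B‖₁ / 4`. -/
theorem CB2_le_CA2_classical_quantum (dB : ℕ)
    (ρ' ρ'' : Matrix (Fin dB) (Fin dB) ℂ)
    (h' : IsDensity ρ') (h'' : IsDensity ρ'') :
    let ρAB : Matrix (Fin 2 × Fin dB) (Fin 2 × Fin dB) ℂ :=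
      (1/2 : ℂ) • (Matrix.single (0 : Fin 2) 0 (1 : ℂ) ⊗ₖ ρ'
        + Matrix.single (1 : Fin 2) 1 (1 : ℂ) ⊗ₖ ρ'')
    (∀ PB : Matrix (Fin dB) (Fin dB) ℂ,
      PB.PosSemidef → ((1 : Matrix (Fin dB) (Fin dB) ℂ) - PB).PosSemidef →
      (((1/2 : ℂ) • (ρ' + ρ'')) * PB).trace = 1/2 →
      traceNorm ((2 : ℂ) • ptraceB (ρAB * ((1 : Matrix (Fin 2) (Fin 2) ℂ) ⊗ₖ PB))
          - (2 : ℂ) • ptraceB (ρAB * ((1 : Matrix (Fin 2) (Fin 2) ℂ) ⊗ₖ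
              ((1 : Matrix (Fin dB) (Fin dB) ℂ) - PB))))
        = 2 * |(((ρ' - ρ'') * PB).trace).re| ∧
      traceNorm ((2 : ℂ) • ptraceB (ρAB * ((1 : Matrix (Fin 2) (Fin 2) ℂ) ⊗ₖ PB))
          - (2 : ℂ) • ptraceB (ρAB * ((1 : Matrix (Fin 2) (Fin 2) ℂ) ⊗ₖ
              ((1 : Matrix (Fin dB) (Fin dB) ℂ) - PB))))
        ≤ traceNorm (ρ' - ρ'')) ∧
    CB2 ρAB ≤ CA2 ρAB ∧
    CA2 ρAB = traceNorm (ρ' - ρ'') / 4 := by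
  intro ρAB
  rw [show ρAB = cqState ρ' ρ'' from rfl]
  have hΔ : (ρ' - ρ'').IsHermitian := h'.1.isHermitian.sub h''.1.isHermitian
  refine ⟨fun PB hP h1P htr => ⟨?_, ?_⟩, ?_, CA2_cqState hΔ h'.2 h''.2⟩
  · exact traceNorm_two_smul_ptraceB_cqState_sub hΔ h'.2 h''.2 hP.isHermitian htr
  · exact traceNorm_two_smul_ptraceB_cqState_sub_le hΔ h'.2 h''.2 hP.nonneg (le_iff.mpr h1P) htr
  · exact (CB2_cqState_le hΔ h'.2 h''.2).trans (CA2_cqState hΔ h'.2 h''.2).ge
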